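/- Let t be a rooted tree with pairwise distinct leaf labels in which every internal vertex has at least two children, and let S be a set of labels. Then the number of vertices of t that are complete with respect to S is at most 2·|S ∩ L(r)|, where r is the root of t; equivalently, the number of vertices v with L(v) ⊆ S is at most twice the number of leaves of t whose label lies in S. (This is the aggregate form of the amortized O(1)-per-leaf counter-update bound.) -/

import Mathlib

/-!
By induction one proves the stronger bound `#complete vertices + [root complete] ≤ 2·|S ∩ L(r)|`.
With distinct labels the counter of a vertex reaches `|L(v)|` only if every child is complete, so
completeness is inherited by children; a complete internal vertex then has at least two complete
children, each carrying one spare unit of the bound, and these pay for the vertex itself.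
-/

inductive RTree (α : Type*) where
  | leaf (a : α)
  | node (children : List (RTree α))

namespace RTree

variable {α : Type*} [DecidableEq α]

/-- The list of leaf labels of a tree. -/
def leafList : RTree α → List α
  | leaf a => [a]
  | node cs => (cs.attach.map fun ⟨w, _⟩ => leafList w).flatten
decreasing_by have := List.sizeOf_lt_of_mem ‹_›; simp only [node.sizeOf_spec]; omega

/-- `L v` is the finite set of labels of leaves in the subtree rooted at `v`. -/
def L (v : RTree α) : Finset α := (leafList v).toFinset

/-- The counter function. -/
def counter (S : Finset α) : RTree α → ℕ
  | leaf a => if a ∈ S then 1 else 0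
  | node cs =>
      (cs.attach.map fun ⟨w, _⟩ =>
        if counter S w = (L w).card then counter S w else 0).sum
decreasing_by have := List.sizeOf_lt_of_mem ‹_›; simp only [node.sizeOf_spec]; omega

/-- `IsVertex v t` means that `v` is a vertex (subtree) of `t`. -/
inductive IsVertex : RTree α → RTree α → Prop
  | refl (t : RTree α) : IsVertex t t
  | child {v w : RTree α} {cs : List (RTree α)} : w ∈ cs → IsVertex v w → IsVertex v (node cs)

/-- The list of all vertices (subtrees) of a tree. -/
def vertexList : RTree α → List (RTree α)
  | leaf a => [leaf a]
  | node cs => node cs :: (cs.attach.map fun ⟨w, _⟩ => vertexList w).flatten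
decreasing_by have := List.sizeOf_lt_of_mem ‹_›; simp only [node.sizeOf_spec]; omega

end RTree

namespace RTree

variable {α : Type*}

@[elab_as_elim]
theorem induction {motive : RTree α → Prop} (leaf : ∀ a, motive (leaf a))
    (node : ∀ cs, (∀ w ∈ cs, motive w) → motive (node cs)) (t : RTree α) : motive t :=
  match t with
  | .leaf a => leaf a
  | .node cs => node cs fun w _ => induction leaf node w
decreasing_by have := List.sizeOf_lt_of_mem ‹_›; simp only [RTree.node.sizeOf_spec]; omega

theorem leafList_node (cs : List (RTree α)) :
    (node cs).leafList = (cs.map leafList).flatten := by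
  rw [leafList]; exact congrArg List.flatten List.attach_map_val

theorem vertexList_node (cs : List (RTree α)) :
    (node cs).vertexList = node cs :: (cs.map vertexList).flatten := by
  rw [vertexList]; exact congrArg (node cs :: List.flatten ·) List.attach_map_val

theorem IsVertex.leafList_sublist {v t : RTree α} (h : IsVertex v t) :
    v.leafList.Sublist t.leafList := by
  induction h with
  | refl => exact .refl _
  | child hw _ ih =>
    exact ih.trans (leafList_node _ ▸ List.sublist_flatten_of_mem (List.mem_map_of_mem hw))

theorem countP_vertexList_add_le (p : RTree α → Bool) (t : RTree α)
    (hbr : ∀ cs, IsVertex (node cs) t → 2 ≤ cs.length)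
    (hp : ∀ cs, IsVertex (node cs) t → p (node cs) → ∀ w ∈ cs, p w) :
    t.vertexList.countP p + (if p t then 1 else 0) ≤ 2 * t.leafList.countP (p ∘ leaf) := by
  induction t using RTree.induction with
  | leaf a => simp only [vertexList, leafList, List.countP_singleton, Function.comp_apply]; omega
  | node cs ih =>
    have hchild : ∀ w ∈ cs, w.vertexList.countP p + (if p w then 1 else 0) ≤
        2 * w.leafList.countP (p ∘ leaf) := fun w hw =>
      ih w hw (fun ds hv => hbr ds (.child hw hv)) (fun ds hv => hp ds (.child hw hv))
    have hbranch :
        2 * (if p (node cs) then 1 else 0) ≤ (cs.map fun w => if p w then 1 else 0).sum := by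
      split_ifs with h
      · rw [List.map_congr_left fun w hw => if_pos (hp cs (.refl _) h w hw)]
        simpa using hbr cs (.refl _)
      · exact Nat.zero_le _
    calc (node cs).vertexList.countP p + (if p (node cs) then 1 else 0)
        = (cs.map fun w => w.vertexList.countP p).sum + 2 * (if p (node cs) then 1 else 0) := by
          rw [vertexList_node, List.countP_cons, List.countP_flatten, List.map_map,
            Function.comp_def]
          ring
      _ ≤ (cs.map fun w => w.vertexList.countP p + (if p w then 1 else 0)).sum := by
          rw [List.sum_map_add]; exact Nat.add_le_add_left hbranch _
      _ ≤ (cs.map fun w => 2 * w.leafList.countP (p ∘ leaf)).sum := List.sum_le_sum hchild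
      _ = 2 * (node cs).leafList.countP (p ∘ leaf) := by
          rw [List.sum_map_mul_left, leafList_node, List.countP_flatten, List.map_map]; rfl

end RTree

theorem List.countP_mem_eq_card_inter {α : Type*} [DecidableEq α] (S : Finset α) {l : List α} (hl : l.Nodup) :
    l.countP (· ∈ S) = (S ∩ l.toFinset).card := by
  rw [List.countP_eq_length_filter, ← List.toFinset_card_of_nodup (hl.filter _),
    List.toFinset_filter, Finset.inter_comm]
  simp [Finset.filter_mem_eq_inter]

namespace RTree

variable {α : Type*} [DecidableEq α]

def IsComplete (S : Finset α) (v : RTree α) : Prop := counter S v = (L v).card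

instance (S : Finset α) : DecidablePred (IsComplete S) := fun v =>
  inferInstanceAs (Decidable (counter S v = (L v).card))

theorem isComplete_leaf {S : Finset α} {a : α} : IsComplete S (leaf a) ↔ a ∈ S := by
  simp [IsComplete, counter, L, leafList]

theorem counter_node (S : Finset α) (cs : List (RTree α)) :
    counter S (node cs) = (cs.map fun w => if IsComplete S w then counter S w else 0).sum := by
  rw [counter]
  exact congrArg List.sum
    (List.attach_map_val (f := fun w => if IsComplete S w then counter S w else 0))

theorem counter_le_length (S : Finset α) (t : RTree α) : counter S t ≤ t.leafList.length := by
  induction t using RTree.induction with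
  | leaf a => rw [counter, leafList]; split <;> simp
  | node cs ih =>
    rw [counter_node, leafList_node, List.length_flatten, List.map_map]
    refine List.sum_le_sum fun w hw => ?_
    split_ifs
    · exact ih w hw
    · exact Nat.zero_le _

theorem IsComplete.of_mem_children {S : Finset α} {cs : List (RTree α)} {w : RTree α}
    (hnd : (node cs).leafList.Nodup) (hc : IsComplete S (node cs)) (hw : w ∈ cs) :
    IsComplete S w := by
  by_contra hw_inc
  have hsum : (cs.map fun w => if IsComplete S w then counter S w else 0).sum =
      (cs.map fun w => w.leafList.length).sum := by
    rw [← counter_node, hc, L, List.toFinset_card_of_nodup hnd, leafList_node,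
      List.length_flatten, List.map_map]; rfl
  have hpos : 0 < w.leafList.length := by
    refine Nat.pos_of_ne_zero fun h0 => hw_inc ?_
    have := counter_le_length S w
    have := List.toFinset_card_le w.leafList
    rw [IsComplete, L]
    omega
  refine (List.sum_lt_sum _ _ (fun v _ => ?_) ⟨w, hw, ?_⟩).ne hsum
  · split_ifs
    · exact counter_le_length S v
    · exact Nat.zero_le _
  · rwa [if_neg hw_inc]

/-- in a tree whose internal vertices all have at least two children, the number
of vertices complete with respect to `S` is at most `2·|S ∩ L(r)|`, where `r` is the root. -/
theorem complete_count_le (t : RTree α) (hnd : t.leafList.Nodup)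
    (hbr : ∀ cs : List (RTree α), IsVertex (node cs) t → 2 ≤ cs.length)
    (S : Finset α) :
    ((vertexList t).filter fun v => decide (counter S v = (L v).card)).length ≤
      2 * (S ∩ L t).card := by
  have hinherit : ∀ cs, IsVertex (node cs) t → IsComplete S (node cs) → ∀ w ∈ cs, IsComplete S w :=
    fun _ hv hc _ hw => hc.of_mem_children (hv.leafList_sublist.nodup hnd) hw
  have hleaves : t.leafList.countP (fun a => decide (IsComplete S (leaf a))) = (S ∩ L t).card := by
    simp only [isComplete_leaf]
    exact List.countP_mem_eq_card_inter S hnd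
  have := countP_vertexList_add_le (fun v => decide (IsComplete S v)) t hbr
    (by simpa using hinherit)
  rw [← List.countP_eq_length_filter, ← hleaves]
  exact le_of_add_le_left this

end RTree
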